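/- arXiv:2203.11974 — 5 statements merged into one kernel-verified Lean document; each statement's English description precedes it below -/
import Mathlib

section
/- Let a, b, c be real numbers with a > 1, b > 1, c > 1 and log b / log a irrational. Then for every δ > 0 there exist natural numbers k, ℓ such that |a^k * b^(-ℓ) - c| < δ. -/
open Metric Finset

noncomputable section

abbrev Vec (d : ℕ) := EuclideanSpace ℝ (Fin d)

def ChainIn {X : Type*} [MetricSpace X] (Φ : ℝ → X → X) (S : Set X)
    (ε T : ℝ) (x y : X) : Prop :=
  ∃ (n : ℕ) (u : ℕ → X) (t : ℕ → ℝ), 1 ≤ n ∧ u 0 = x ∧ u n = y ∧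
    (∀ i ≤ n, u i ∈ S) ∧ (∀ i < n, T ≤ t i) ∧
    ∀ i < n, dist (Φ (t i) (u i)) (u (i + 1)) < ε

def OmegaIn {X : Type*} [MetricSpace X] (Φ : ℝ → X → X) (S : Set X) (x : X) : Set X :=
  {y | ∀ ε T : ℝ, 0 < ε → 0 < T → ChainIn Φ S ε T x y}

def ChainTransOn {X : Type*} [MetricSpace X] (Φ : ℝ → X → X) (S A : Set X) : Prop :=
  ∀ x ∈ A, ∀ y ∈ A, y ∈ OmegaIn Φ S x

structure IsFlow {X : Type*} [MetricSpace X] (Φ : ℝ → X → X) : Prop where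
  cont : Continuous fun q : ℝ × X => Φ q.1 q.2
  init : ∀ x, Φ 0 x = x
  comp : ∀ s t x, Φ (s + t) x = Φ s (Φ t x)

def sphere1 (d : ℕ) : Set (Vec d) := {v | ‖v‖ = 1}

structure IsLinearFlow (d : ℕ) (Φ : ℝ → Vec d → Vec d) : Prop where
  cont : Continuous fun q : ℝ × Vec d => Φ q.1 q.2
  lin : ∀ t, IsLinearMap ℝ (Φ t)
  init : ∀ x, Φ 0 x = x
  comp : ∀ s t x, Φ (s + t) x = Φ s (Φ t x)

def sphFlow {d : ℕ} (Φ : ℝ → Vec d → Vec d) : ℝ → Vec d → Vec d :=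
  fun t v => ‖Φ t v‖⁻¹ • Φ t v

abbrev PVec (d : ℕ) := WithLp 2 (Vec d × ℝ)

def emb {d : ℕ} (v : Vec d) (r : ℝ) : PVec d := (WithLp.equiv 2 (Vec d × ℝ)).symm (v, r)

def piP {d : ℕ} (v : Vec d) : PVec d := ‖emb v 1‖⁻¹ • emb v 1

def extFlow {d : ℕ} (Φ : ℝ → Vec d → Vec d) : ℝ → PVec d → PVec d :=
  fun t p => emb (Φ t ((WithLp.equiv 2 (Vec d × ℝ)) p).1) ((WithLp.equiv 2 (Vec d × ℝ)) p).2

def poinFlow {d : ℕ} (Φ : ℝ → Vec d → Vec d) : ℝ → PVec d → PVec d :=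
  fun t p => ‖extFlow Φ t p‖⁻¹ • extFlow Φ t p

def openHemi (d : ℕ) : Set (PVec d) :=
  {p | ‖p‖ = 1 ∧ 0 < ((WithLp.equiv 2 (Vec d × ℝ)) p).2}

def closedHemi (d : ℕ) : Set (PVec d) :=
  {p | ‖p‖ = 1 ∧ 0 ≤ ((WithLp.equiv 2 (Vec d × ℝ)) p).2}

def matFlow (d : ℕ) (A : Matrix (Fin d) (Fin d) ℝ) : ℝ → Vec d → Vec d :=
  fun t x => (EuclideanSpace.equiv (Fin d) ℝ).symm
    ((NormedSpace.exp (t • A)).mulVec (EuclideanSpace.equiv (Fin d) ℝ x))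

/-!
Write `ξ = log b / log a` and `t = log c / log a`, so that `a ^ k * b ^ (-l) = exp (log a * (k - l ξ))`
and it suffices to approximate `t > 0` by numbers `k - l ξ` with `k, l ∈ ℕ`. These numbers are closed
under addition. Dirichlet's approximation theorem gives such a number `g` with `0 < |g| < ε`
(nonzero because `ξ` is irrational). If `g > 0` some multiple `j g` lies within `ε` of `t`;
if `g < 0` the same holds for `N + j g` with `N ≥ t`.
-/

open Real

lemma exists_nat_abs_add_nat_mul_sub_lt {g s t : ℝ} (hg : 0 < g) (hst : s ≤ t) :
    ∃ j : ℕ, |s + j * g - t| < g := by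
  set j := ⌊(t - s) / g⌋₊
  have hj_le : (j : ℝ) * g ≤ t - s :=
    (le_div_iff₀ hg).mp (Nat.floor_le (div_nonneg (sub_nonneg.mpr hst) hg.le))
  have hj_lt : t - s < (j + 1) * g := (div_lt_iff₀ hg).mp (Nat.lt_floor_add_one _)
  exact ⟨j, abs_sub_lt_iff.mpr ⟨by linarith, by linarith⟩⟩

lemma Irrational.exists_nat_sub_nat_mul_ne_zero_abs_lt {ξ ε : ℝ} (hξ : Irrational ξ) (hξ0 : 0 < ξ)
    (hε : 0 < ε) : ∃ k l : ℕ, (k : ℝ) - l * ξ ≠ 0 ∧ |(k : ℝ) - l * ξ| < ε := by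
  obtain ⟨n, hn⟩ := exists_nat_one_div_lt hε
  obtain ⟨j, l, hl, -, hjl⟩ := Real.exists_int_int_abs_mul_sub_le ξ n.succ_pos
  push_cast at hjl
  have hmono : 1 / ((n : ℝ) + 1 + 1) ≤ 1 / (n + 1) := by gcongr; linarith
  have hjl' : |(j : ℝ) - l * ξ| < ε := by rw [abs_sub_comm]; linarith
  have hj : 0 ≤ j := by
    have hn1 : 1 / ((n : ℝ) + 1 + 1) < 1 := by rw [div_lt_one (by positivity)]; linarith
    have hlξ : (0 : ℝ) < l * ξ := mul_pos (Int.cast_pos.mpr hl) hξ0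
    have : ((-1 : ℤ) : ℝ) < j := by push_cast; linarith [(abs_le.mp hjl).2]
    have := Int.cast_lt.mp this
    omega
  lift j to ℕ using hj
  lift l to ℕ using hl.le
  refine ⟨j, l, fun h => ?_, by exact_mod_cast hjl'⟩
  have hl0 : l ≠ 0 := by exact_mod_cast hl.ne'
  exact (hξ.natCast_mul hl0).ne_nat j (by linarith)

lemma Irrational.exists_nat_abs_sub_nat_mul_sub_lt {ξ t ε : ℝ} (hξ : Irrational ξ) (hξ0 : 0 < ξ)
    (ht : 0 ≤ t) (hε : 0 < ε) : ∃ k l : ℕ, |(k : ℝ) - l * ξ - t| < ε := by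
  obtain ⟨k, l, hg0, hgε⟩ := hξ.exists_nat_sub_nat_mul_ne_zero_abs_lt hξ0 hε
  rcases hg0.lt_or_gt with hneg | hpos
  · obtain ⟨j, hj⟩ := exists_nat_abs_add_nat_mul_sub_lt (neg_pos.mpr hneg)
      (neg_le_neg (Nat.le_ceil t))
    refine ⟨⌈t⌉₊ + j * k, j * l, ?_⟩
    rw [abs_lt] at hj hgε ⊢
    push_cast
    constructor <;> linarith
  · obtain ⟨j, hj⟩ := exists_nat_abs_add_nat_mul_sub_lt hpos ht
    refine ⟨j * k, j * l, ?_⟩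
    rw [abs_lt] at hj hgε ⊢
    push_cast
    constructor <;> linarith

lemma pow_mul_zpow_neg_eq_exp {a b : ℝ} (ha : 0 < a) (hb : 0 < b) (ha1 : a ≠ 1) (k l : ℕ) :
    a ^ k * b ^ (-(l : ℤ)) = exp (log a * (k - l * (log b / log a))) := by
  have hla : log a ≠ 0 := log_ne_zero_of_pos_of_ne_one ha ha1
  have hlb : log a * (l * (log b / log a)) = l * log b := by field_simp
  rw [mul_sub, hlb, exp_sub, mul_comm (log a), exp_nat_mul, exp_nat_mul, exp_log ha, exp_log hb,
    zpow_neg, zpow_natCast, div_eq_mul_inv]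

theorem stmt0 (a b c : ℝ) (ha : 1 < a) (hb : 1 < b) (hc : 1 < c)
    (hirr : Irrational (Real.log b / Real.log a)) :
    ∀ δ : ℝ, 0 < δ → ∃ k l : ℕ, |a ^ k * b ^ (-(l : ℤ)) - c| < δ := by
  intro δ hδ
  have hla : 0 < log a := log_pos ha
  have hexp_t : exp (log a * (log c / log a)) = c := by
    rw [mul_div_cancel₀ _ hla.ne', exp_log (by linarith)]
  have hcont : Continuous fun x => exp (log a * x) := by fun_prop
  obtain ⟨ε, hε, hclose⟩ := Metric.continuousAt_iff.mp hcont.continuousAt δ hδ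
  obtain ⟨k, l, hkl⟩ := hirr.exists_nat_abs_sub_nat_mul_sub_lt (div_pos (log_pos hb) hla)
    (div_pos (log_pos hc) hla).le hε
  refine ⟨k, l, ?_⟩
  rw [pow_mul_zpow_neg_eq_exp (by linarith) (by linarith) ha.ne', ← hexp_t, ← Real.dist_eq]
  exact hclose (by rwa [Real.dist_eq])
end
end

section
/- Let Φ be a flow on the unit sphere S^{d-1} ⊂ ℝ^d commuting with the antipodal map, and let p: S^{d-1} → ℝP^{d-1} be the quotient projection, with induced flow on ℝP^{d-1}. If for v, w ∈ S^{d-1} the point p(w) lies in the chain limit set Ω(p(v)) of the projectivized flow, then w ∈ Ω(v) or -w ∈ Ω(v) for the flow on the sphere. -/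
open Metric Finset

noncomputable section

structure IsProjQuot {P : Type*} [MetricSpace P] (d : ℕ) (p : Vec d → P)
    (Φ : ℝ → Vec d → Vec d) (Ψ : ℝ → P → P) : Prop where
  surj : ∀ q : P, ∃ v ∈ sphere1 d, p v = q
  fib : ∀ v ∈ sphere1 d, ∀ w ∈ sphere1 d, (p v = p w ↔ v = w ∨ v = -w)
  dist_eq : ∀ v ∈ sphere1 d, ∀ w ∈ sphere1 d,
    dist (p v) (p w) = min (dist v w) (dist v (-w))
  conj : ∀ t : ℝ, ∀ v ∈ sphere1 d, Ψ t (p v) = p (Φ t v)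

/-
A Ψ-chain from p v can be lifted, step by step, to a Φ-chain on the sphere starting at v.
Each point u of the chain has two preimages ±z, and since dist (p a) (p z) = min (dist a z) (dist a (-z)),
choosing the preimage nearer to the image of the previous lifted point keeps every jump below ε.
The lifted chain ends at w or at -w; if the sign could not be fixed once and for all, some (ε₁, T₁) admits
no chain to w, and then every finer (ε, T) admits a chain to -w.
-/

theorem ChainIn.mono {X : Type*} [MetricSpace X] {Φ : ℝ → X → X} {S : Set X}
    {ε ε' T T' : ℝ} {x y : X} (h : ChainIn Φ S ε' T' x y)
    (hε : ε' ≤ ε) (hT : T ≤ T') : ChainIn Φ S ε T x y := by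
  obtain ⟨n, u, t, hn, h0, hl, hS, ht, hd⟩ := h
  exact ⟨n, u, t, hn, h0, hl, hS, fun i hi => hT.trans (ht i hi),
    fun i hi => (hd i hi).trans_le hε⟩

theorem mem_omegaIn_or_of_forall_chainIn_or {X : Type*} [MetricSpace X] {Φ : ℝ → X → X}
    {S : Set X} {x y y' : X}
    (h : ∀ ε T : ℝ, 0 < ε → 0 < T → ChainIn Φ S ε T x y ∨ ChainIn Φ S ε T x y') :
    y ∈ OmegaIn Φ S x ∨ y' ∈ OmegaIn Φ S x := by
  by_cases hy : y ∈ OmegaIn Φ S x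
  · exact Or.inl hy
  right
  simp only [OmegaIn, Set.mem_ofPred_eq, not_forall] at hy
  obtain ⟨ε₁, T₁, hε₁, -, hno⟩ := hy
  intro ε T hε hT
  rcases h (min ε ε₁) (max T T₁) (lt_min hε hε₁) (hT.trans_le (le_max_left _ _)) with hc | hc
  · exact absurd (hc.mono (min_le_right _ _) (le_max_right _ _)) hno
  · exact hc.mono (min_le_left _ _) (le_max_left _ _)

section SignedLift

variable {E : Type*} [SeminormedAddCommGroup E]

def nearerSign (a z : E) : E := if dist a z ≤ dist a (-z) then z else -z

theorem nearerSign_eq_or (a z : E) : nearerSign a z = z ∨ nearerSign a z = -z := by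
  unfold nearerSign; split_ifs <;> simp

theorem dist_nearerSign (a z : E) : dist a (nearerSign a z) = min (dist a z) (dist a (-z)) := by
  unfold nearerSign
  split_ifs with h
  · exact (min_eq_left h).symm
  · exact (min_eq_right (le_of_not_ge h)).symm

def signedLift (Φ : ℝ → E → E) (t : ℕ → ℝ) (z : ℕ → E) (v : E) : ℕ → E
  | 0 => v
  | i + 1 => nearerSign (Φ (t i) (signedLift Φ t z v i)) (z (i + 1))

end SignedLift

section Sphere

variable {d : ℕ}

theorem neg_mem_sphere1 {x : Vec d} (hx : x ∈ sphere1 d) : -x ∈ sphere1 d := by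
  simpa [sphere1] using hx

theorem nearerSign_mem_sphere1 {a z : Vec d} (hz : z ∈ sphere1 d) :
    nearerSign a z ∈ sphere1 d := by
  rcases nearerSign_eq_or a z with h | h <;> rw [h]
  exacts [hz, neg_mem_sphere1 hz]

theorem signedLift_mem_sphere1 {Φ : ℝ → Vec d → Vec d} {t : ℕ → ℝ} {z : ℕ → Vec d} {v : Vec d}
    (hv : v ∈ sphere1 d) (hz : ∀ i, z i ∈ sphere1 d) : ∀ i, signedLift Φ t z v i ∈ sphere1 d
  | 0 => hv
  | _ + 1 => nearerSign_mem_sphere1 (hz _)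

end Sphere

namespace IsProjQuot

variable {d : ℕ} {P : Type*} [MetricSpace P] {p : Vec d → P}
  {Φ : ℝ → Vec d → Vec d} {Ψ : ℝ → P → P}

theorem map_neg (hq : IsProjQuot d p Φ Ψ) {x : Vec d} (hx : x ∈ sphere1 d) : p (-x) = p x :=
  (hq.fib _ (neg_mem_sphere1 hx) _ hx).2 (Or.inr rfl)

theorem map_nearerSign (hq : IsProjQuot d p Φ Ψ) {a z : Vec d} (hz : z ∈ sphere1 d) :
    p (nearerSign a z) = p z := by
  rcases nearerSign_eq_or a z with h | h <;> rw [h]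
  exact hq.map_neg hz

theorem dist_signedLift_succ (hq : IsProjQuot d p Φ Ψ)
    (hsph : ∀ t : ℝ, ∀ v ∈ sphere1 d, Φ t v ∈ sphere1 d) {t : ℕ → ℝ} {z : ℕ → Vec d}
    {v : Vec d} (hv : v ∈ sphere1 d) (hz : ∀ i, z i ∈ sphere1 d) (i : ℕ) :
    dist (Φ (t i) (signedLift Φ t z v i)) (signedLift Φ t z v (i + 1)) =
      dist (Ψ (t i) (p (signedLift Φ t z v i))) (p (z (i + 1))) := by
  have hσ := signedLift_mem_sphere1 (Φ := Φ) (t := t) hv hz i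
  rw [signedLift, dist_nearerSign, hq.conj _ _ hσ, hq.dist_eq _ (hsph _ _ hσ) _ (hz _)]

theorem exists_chainIn_lift (hq : IsProjQuot d p Φ Ψ)
    (hsph : ∀ t : ℝ, ∀ v ∈ sphere1 d, Φ t v ∈ sphere1 d) {ε T : ℝ} {v : Vec d} {q : P}
    (hv : v ∈ sphere1 d) (h : ChainIn Ψ Set.univ ε T (p v) q) :
    ∃ y ∈ sphere1 d, p y = q ∧ ChainIn Φ (sphere1 d) ε T v y := by
  obtain ⟨n, u, t, hn, h0, hl, -, ht, hd⟩ := h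
  choose z hz hpz using fun i => hq.surj (u i)
  have hσ := signedLift_mem_sphere1 (Φ := Φ) (t := t) hv hz
  have hpσ : ∀ i, p (signedLift Φ t z v i) = u i
    | 0 => h0.symm
    | i + 1 => (hq.map_nearerSign (hz _)).trans (hpz _)
  refine ⟨_, hσ n, (hpσ n).trans hl, n, signedLift Φ t z v, t, hn, rfl, rfl,
    fun i _ => hσ i, ht, fun i hi => ?_⟩
  rw [dist_signedLift_succ hq hsph hv hz, hpσ, hpz]
  exact hd i hi

end IsProjQuot

theorem stmt2_general {d : ℕ} {P : Type*} [MetricSpace P] (p : Vec d → P)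
    (Φ : ℝ → Vec d → Vec d) (Ψ : ℝ → P → P)
    (hsph : ∀ t : ℝ, ∀ v ∈ sphere1 d, Φ t v ∈ sphere1 d)
    (hq : IsProjQuot d p Φ Ψ)
    (v w : Vec d) (hv : v ∈ sphere1 d) (hw : w ∈ sphere1 d)
    (h : p w ∈ OmegaIn Ψ Set.univ (p v)) :
    w ∈ OmegaIn Φ (sphere1 d) v ∨ -w ∈ OmegaIn Φ (sphere1 d) v := by
  refine mem_omegaIn_or_of_forall_chainIn_or fun ε T hε hT => ?_
  obtain ⟨y, hy, hpy, hchain⟩ := hq.exists_chainIn_lift hsph hv (h ε T hε hT)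
  rcases (hq.fib _ hy _ hw).1 hpy with rfl | rfl
  exacts [Or.inl hchain, Or.inr hchain]

theorem stmt2 {d : ℕ} {P : Type*} [MetricSpace P] (p : Vec d → P)
    (Φ : ℝ → Vec d → Vec d) (Ψ : ℝ → P → P)
    (hΦ : IsFlow Φ) (hΨ : IsFlow Ψ)
    (hsph : ∀ t : ℝ, ∀ v ∈ sphere1 d, Φ t v ∈ sphere1 d)
    (hneg : ∀ (t : ℝ) (x : Vec d), Φ t (-x) = -Φ t x)
    (hq : IsProjQuot d p Φ Ψ)
    (v w : Vec d) (hv : v ∈ sphere1 d) (hw : w ∈ sphere1 d)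
    (h : p w ∈ OmegaIn Ψ Set.univ (p v)) :
    w ∈ OmegaIn Φ (sphere1 d) v ∨ -w ∈ OmegaIn Φ (sphere1 d) v :=
  stmt2_general p Φ Ψ hsph hq v w hv hw h
end
end

section
/- Let Φ be a linear flow on ℝ^d with induced flow π_PΦ on the open upper hemisphere of S^d defined by π_PΦ(t, π_P v) = π_P(Φ(t, v)). Given an (ε,T)-chain ζ on S^{d-1} for the normalized flow with lift ŵ = (w_0, ..., w_n) to ℝ^d and any α > 0, the sequence π_P(α w_0), ..., π_P(α w_n) with the same times T_i is an (ε,T)-chain for π_PΦ, i.e., the Euclidean distance in ℝ^{d+1} satisfies ‖π_PΦ(T_i, π_P(α w_i)) - π_P(α w_{i+1})‖ ≤ ‖SΦ(T_i, v_i) - v_{i+1}‖ < ε for all i. -/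
open Metric Finset

noncomputable section

/-!
Because `π_P` intertwines `Φ` with `π_PΦ` and `Φ` is linear, both `π_PΦ(T_i, π_P(α w_i))` and
`π_P(α w_{i+1})` are of the form `π_P(K x)` with unit vectors `x = SΦ(T_i, v_i)`, `x = v_{i+1}`
and the same scalar `K = α C_i`. On the sphere of radius `|K|`, `π_P` is `x ↦ (x, 1) / √(K² + 1)`,
which scales distances by `|K| / √(K² + 1) ≤ 1`.
-/

lemma IsLinearFlow.map_ne_zero {d : ℕ} {Φ : ℝ → Vec d → Vec d} (hΦ : IsLinearFlow d Φ)
    (s : ℝ) {z : Vec d} (hz : z ≠ 0) : Φ s z ≠ 0 := by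
  intro h
  apply hz
  rw [← hΦ.init z, ← neg_add_cancel s, hΦ.comp, h, (hΦ.lin (-s)).map_zero]

lemma IsLinearFlow.map_ne_zero_of_norm_eq_one {d : ℕ} {Φ : ℝ → Vec d → Vec d}
    (hΦ : IsLinearFlow d Φ) (s : ℝ) {v : Vec d} (hv : ‖v‖ = 1) : Φ s v ≠ 0 :=
  hΦ.map_ne_zero s (ne_zero_of_norm_ne_zero (hv ▸ one_ne_zero))

lemma norm_sphFlow {d : ℕ} {Φ : ℝ → Vec d → Vec d} (hΦ : IsLinearFlow d Φ) (s : ℝ)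
    {v : Vec d} (hv : ‖v‖ = 1) : ‖sphFlow Φ s v‖ = 1 :=
  norm_smul_inv_norm (hΦ.map_ne_zero_of_norm_eq_one s hv)

lemma IsLinearFlow.map_smul_eq_smul_sphFlow {d : ℕ} {Φ : ℝ → Vec d → Vec d}
    (hΦ : IsLinearFlow d Φ) (s c : ℝ) {v : Vec d} (hv : ‖v‖ = 1) :
    Φ s (c • v) = (c * ‖Φ s v‖) • sphFlow Φ s v := by
  rw [(hΦ.lin s).map_smul, sphFlow, smul_smul, mul_assoc,
    mul_inv_cancel₀ (norm_ne_zero_iff.mpr (hΦ.map_ne_zero_of_norm_eq_one s hv)), mul_one]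

lemma norm_emb {d : ℕ} (x : Vec d) (r : ℝ) : ‖emb x r‖ = √(‖x‖ ^ 2 + r ^ 2) := by
  rw [WithLp.prod_norm_eq_of_L2]
  simp [emb, Real.norm_eq_abs, sq_abs]

lemma emb_sub {d : ℕ} (x y : Vec d) (r s : ℝ) : emb x r - emb y s = emb (x - y) (r - s) := rfl

lemma smul_emb {d : ℕ} (c : ℝ) (x : Vec d) (r : ℝ) : c • emb x r = emb (c • x) (c * r) := rfl

lemma norm_emb_one_pos {d : ℕ} (x : Vec d) : 0 < ‖emb x 1‖ := by
  rw [norm_emb]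
  positivity

lemma poinFlow_piP {d : ℕ} {Φ : ℝ → Vec d → Vec d} (hlin : ∀ s, IsLinearMap ℝ (Φ s))
    (s : ℝ) (z : Vec d) : poinFlow Φ s (piP z) = piP (Φ s z) := by
  have hc := norm_emb_one_pos z
  have hext : extFlow Φ s (piP z) = ‖emb z 1‖⁻¹ • emb (Φ s z) 1 := by
    change emb (Φ s (‖emb z 1‖⁻¹ • z)) (‖emb z 1‖⁻¹ * 1) = _
    rw [(hlin s).map_smul, smul_emb]
  rw [poinFlow, hext, piP, norm_smul, Real.norm_of_nonneg (inv_nonneg.mpr hc.le), smul_smul,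
    mul_inv, inv_inv, mul_right_comm, mul_inv_cancel₀ hc.ne', one_mul]

lemma dist_piP_of_norm_eq {d : ℕ} {x y : Vec d} (h : ‖x‖ = ‖y‖) :
    dist (piP x) (piP y) = dist x y / √(‖x‖ ^ 2 + 1) := by
  have hnorm : ‖emb y 1‖ = ‖emb x 1‖ := by rw [norm_emb, norm_emb, h]
  rw [dist_eq_norm, piP, piP, hnorm, ← smul_sub, emb_sub, sub_self, norm_smul, norm_emb,
    norm_emb, norm_inv, Real.norm_of_nonneg (Real.sqrt_nonneg _), zero_pow two_ne_zero,
    add_zero, Real.sqrt_sq (norm_nonneg _), one_pow, dist_eq_norm, inv_mul_eq_div]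

lemma dist_piP_smul_le {d : ℕ} {x y : Vec d} (hx : ‖x‖ = 1) (hy : ‖y‖ = 1) (K : ℝ) :
    dist (piP (K • x)) (piP (K • y)) ≤ dist x y := by
  have hnorm (z : Vec d) (hz : ‖z‖ = 1) : ‖K • z‖ = |K| := by
    rw [norm_smul, hz, mul_one, Real.norm_eq_abs]
  rw [dist_piP_of_norm_eq ((hnorm x hx).trans (hnorm y hy).symm), hnorm x hx, dist_smul₀,
    Real.norm_eq_abs, div_le_iff₀ (by positivity), mul_comm]
  gcongr
  exact Real.le_sqrt_of_sq_le (by linarith)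

theorem stmt8_general {d : ℕ} (Φ : ℝ → Vec d → Vec d) (hΦ : IsLinearFlow d Φ)
    (n : ℕ) (v : ℕ → Vec d) (t : ℕ → ℝ) (ε : ℝ)
    (hv : ∀ i ≤ n, ‖v i‖ = 1)
    (hchain : ∀ i < n, dist (sphFlow Φ (t i) (v i)) (v (i + 1)) < ε)
    (w : ℕ → Vec d)
    (hw : ∀ i, w i = (∏ j ∈ Finset.range i, ‖Φ (t j) (v j)‖) • v i)
    (α : ℝ) :
    ∀ i < n,
      dist (poinFlow Φ (t i) (piP (α • w i))) (piP (α • w (i + 1)))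
        ≤ dist (sphFlow Φ (t i) (v i)) (v (i + 1)) ∧
      dist (poinFlow Φ (t i) (piP (α • w i))) (piP (α • w (i + 1))) < ε := by
  intro i hi
  set C := α * ∏ j ∈ range i, ‖Φ (t j) (v j)‖
  have hlift : α • w i = C • v i := by rw [hw, smul_smul]
  have hlift_succ : α • w (i + 1) = (C * ‖Φ (t i) (v i)‖) • v (i + 1) := by
    rw [hw, smul_smul, prod_range_succ, mul_assoc]
  have hle : dist (poinFlow Φ (t i) (piP (α • w i))) (piP (α • w (i + 1)))
      ≤ dist (sphFlow Φ (t i) (v i)) (v (i + 1)) := by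
    rw [hlift, hlift_succ, poinFlow_piP hΦ.lin, hΦ.map_smul_eq_smul_sphFlow _ _ (hv i hi.le)]
    exact dist_piP_smul_le (norm_sphFlow hΦ _ (hv i hi.le)) (hv (i + 1) hi) _
  exact ⟨hle, hle.trans_lt (hchain i hi)⟩

theorem stmt8 {d : ℕ} (Φ : ℝ → Vec d → Vec d) (hΦ : IsLinearFlow d Φ)
    (n : ℕ) (v : ℕ → Vec d) (t : ℕ → ℝ) (ε T : ℝ) (hε : 0 < ε) (hT : 0 < T)
    (hv : ∀ i ≤ n, ‖v i‖ = 1) (ht : ∀ i < n, T ≤ t i)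
    (hchain : ∀ i < n, dist (sphFlow Φ (t i) (v i)) (v (i + 1)) < ε)
    (w : ℕ → Vec d)
    (hw : ∀ i, w i = (∏ j ∈ Finset.range i, ‖Φ (t j) (v j)‖) • v i)
    (α : ℝ) (hα : 0 < α) :
    ∀ i < n,
      dist (poinFlow Φ (t i) (piP (α • w i))) (piP (α • w (i + 1)))
        ≤ dist (sphFlow Φ (t i) (v i)) (v (i + 1)) ∧
      dist (poinFlow Φ (t i) (piP (α • w i))) (piP (α • w (i + 1))) < ε :=
  stmt8_general Φ hΦ n v t ε hv hchain w hw α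
end
end

section
/- Let Φ be a flow on a compact metric space X, and let S ⊂ X be chain transitive. Then for every ε, T > 0 there is a time bound T̄(ε,T) > 0 such that for all x, y ∈ S there is an (ε,T)-chain from x to y with total time at most T̄(ε,T). -/
open Metric Finset

noncomputable section

/-! Fix `z ∈ S` and finitely many points `p ∈ S` whose small balls cover `S`. A chain from `x ∈ S`
to `y ∈ S` goes `x → z → y` by the chains `p → z` and `z → q` for centres `p`, `q` near `x`, `y`,
so the total time is bounded by the longest of these finitely many chains. The endpoint `y` can
replace `q` directly. The start `x` cannot replace `p`, since the first time of the chain `p → z` is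
not controlled; instead take the chain `p → z` with times `≥ 2T` and replace its first point by
`Φ T p`, which is reached from `x` by one jump of time `T` because `Φ T` is uniformly continuous. -/

section TimeBoundedChain

variable {X : Type*} [MetricSpace X] {Φ : ℝ → X → X}

def TimeBoundedChain (Φ : ℝ → X → X) (ε T τ : ℝ) (x y : X) : Prop :=
  ∃ (n : ℕ) (u : ℕ → X) (t : ℕ → ℝ), 1 ≤ n ∧ u 0 = x ∧ u n = y ∧
    (∀ i < n, T ≤ t i) ∧ (∀ i < n, dist (Φ (t i) (u i)) (u (i + 1)) < ε) ∧
    ∑ i ∈ range n, t i ≤ τ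

namespace TimeBoundedChain

variable {ε T τ τ' : ℝ} {x y z : X}

theorem mono_time (h : TimeBoundedChain Φ ε T τ x y) (hτ : τ ≤ τ') :
    TimeBoundedChain Φ ε T τ' x y := by
  obtain ⟨n, u, t, hn, hu0, hun, ht, hd, hsum⟩ := h
  exact ⟨n, u, t, hn, hu0, hun, ht, hd, hsum.trans hτ⟩

theorem single {t : ℝ} (hT : T ≤ t) (hd : dist (Φ t x) y < ε) :
    TimeBoundedChain Φ ε T t x y :=
  ⟨1, fun i => if i = 0 then x else y, fun _ => t, le_rfl, rfl, rfl,
    fun _ _ => hT, fun i hi => by simpa [Nat.lt_one_iff.mp hi] using hd, by simp⟩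

theorem trans (h₁ : TimeBoundedChain Φ ε T τ x y) (h₂ : TimeBoundedChain Φ ε T τ' y z) :
    TimeBoundedChain Φ ε T (τ + τ') x z := by
  obtain ⟨n, u, t, hn, hu0, hun, ht, hd, hsum⟩ := h₁
  obtain ⟨m, v, s, hm, hv0, hvm, hs, he, hsum'⟩ := h₂
  set w : ℕ → X := fun i => if i < n then u i else v (i - n)
  set r : ℕ → ℝ := fun i => if i < n then t i else s (i - n)
  have hw_left : ∀ i ≤ n, w i = u i := by
    intro i hi
    rcases hi.lt_or_eq with hi | rfl
    · exact if_pos hi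
    · simp [w, hun, hv0]
  have hw_right : ∀ i, n ≤ i → w i = v (i - n) := fun i hi => if_neg (by omega)
  have hr_left : ∀ i < n, r i = t i := fun i hi => if_pos hi
  have hr_right : ∀ i, n ≤ i → r i = s (i - n) := fun i hi => if_neg (by omega)
  refine ⟨n + m, w, r, by omega, (hw_left 0 (by omega)).trans hu0,
    (hw_right _ (by omega)).trans (by simpa using hvm), fun i hi => ?_, fun i hi => ?_, ?_⟩
  · rcases lt_or_ge i n with hin | hin
    · exact hr_left i hin ▸ ht i hin
    · exact hr_right i hin ▸ hs _ (by omega)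
  · rcases lt_or_ge i n with hin | hin
    · rw [hr_left i hin, hw_left i hin.le, hw_left (i + 1) hin]
      exact hd i hin
    · rw [hr_right i hin, hw_right i hin, hw_right (i + 1) (by omega), Nat.sub_add_comm hin]
      exact he _ (by omega)
  · rw [sum_range_add, sum_congr rfl fun i hi => hr_left i (mem_range.mp hi),
      sum_congr rfl fun i _ => hr_right (n + i) (by omega)]
    simp only [Nat.add_sub_cancel_left]
    linarith

/-- Flowing the starting point for time `s` shortens the first jump by `s`. -/
theorem flow_start (hΦ : IsFlow Φ) {s : ℝ} (hs : 0 ≤ s)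
    (h : TimeBoundedChain Φ ε (T + s) τ x y) :
    TimeBoundedChain Φ ε T (τ - s) (Φ s x) y := by
  obtain ⟨n, u, t, hn, hu0, hun, ht, hd, hsum⟩ := h
  refine ⟨n, Function.update u 0 (Φ s x), Function.update t 0 (t 0 - s), hn, by simp,
    by rwa [Function.update_of_ne (by omega)], fun i hi => ?_, fun i hi => ?_, ?_⟩
  · rcases eq_or_ne i 0 with rfl | hi0
    · simp only [Function.update_self]
      linarith [ht 0 hi]
    · rw [Function.update_of_ne hi0]
      linarith [ht i hi]
  · rcases eq_or_ne i 0 with rfl | hi0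
    · simp only [Function.update_self, zero_add, Function.update_of_ne one_ne_zero]
      rw [← hΦ.comp, sub_add_cancel, ← hu0]
      exact hd 0 hi
    · rw [Function.update_of_ne hi0, Function.update_of_ne hi0,
        Function.update_of_ne (Nat.succ_ne_zero i)]
      exact hd i hi
  · have h0 : 0 ∈ range n := mem_range.mpr hn
    rw [sum_update_of_mem h0]
    rw [sum_eq_add_sum_sdiff_singleton_of_mem h0] at hsum
    linarith

theorem move_end {δ : ℝ} (h : TimeBoundedChain Φ ε T τ x y) (hyz : dist y z < δ) :
    TimeBoundedChain Φ (ε + δ) T τ x z := by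
  obtain ⟨n, u, t, hn, hu0, hun, ht, hd, hsum⟩ := h
  refine ⟨n, Function.update u n z, t, hn, by rwa [Function.update_of_ne (by omega)], by simp,
    ht, fun i hi => ?_, hsum⟩
  rw [Function.update_of_ne hi.ne]
  rcases eq_or_ne (i + 1) n with hin | hin
  · have hi' := hd i hi
    rw [hin, hun] at hi'
    rw [hin, Function.update_self]
    linarith [dist_triangle (Φ (t i) (u i)) y z]
  · rw [Function.update_of_ne hin]
    linarith [hd i hi, dist_nonneg (x := y) (y := z)]

end TimeBoundedChain

theorem ChainIn.exists_timeBoundedChain {S : Set X} {ε T : ℝ} {x y : X}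
    (h : ChainIn Φ S ε T x y) : ∃ τ, TimeBoundedChain Φ ε T τ x y := by
  obtain ⟨n, u, t, hn, hu0, hun, -, ht, hd⟩ := h
  exact ⟨_, n, u, t, hn, hu0, hun, ht, hd, le_rfl⟩

theorem ChainTransOn.exists_timeBoundedChain [CompactSpace X] (hΦ : IsFlow Φ) {S : Set X}
    (hS : ChainTransOn Φ Set.univ S) {ε T : ℝ} (hε : 0 < ε) (hT : 0 < T) :
    ∃ τ, ∀ x ∈ S, ∀ y ∈ S, TimeBoundedChain Φ ε T τ x y := by
  rcases S.eq_empty_or_nonempty with rfl | ⟨z, hz⟩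
  · exact ⟨0, by simp⟩
  obtain ⟨δ, hδ, hΦT⟩ := Metric.uniformContinuous_iff.mp
    (CompactSpace.uniformContinuous_of_continuous
      (hΦ.cont.comp (Continuous.prodMk_right T))) ε hε
  obtain ⟨F, hFS, hF, hcover⟩ := finite_approx_of_totallyBounded
    (isCompact_univ.totallyBounded.subset (Set.subset_univ S)) (min δ (ε / 2)) (by positivity)
  choose! τ₁ hτ₁ using fun p (hp : p ∈ S) =>
    (hS p hp z hz ε (T + T) hε (by positivity)).exists_timeBoundedChain
  choose! τ₂ hτ₂ using fun p (hp : p ∈ S) =>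
    (hS z hz p hp (ε / 2) T (half_pos hε) hT).exists_timeBoundedChain
  obtain ⟨M₁, hM₁⟩ := (hF.image τ₁).bddAbove
  obtain ⟨M₂, hM₂⟩ := (hF.image τ₂).bddAbove
  refine ⟨M₁ + M₂, fun x hx y hy => ?_⟩
  obtain ⟨p, hpF, hxp⟩ := Set.mem_iUnion₂.mp (hcover hx)
  obtain ⟨q, hqF, hyq⟩ := Set.mem_iUnion₂.mp (hcover hy)
  have hxz : TimeBoundedChain Φ ε T (τ₁ p) x z :=
    ((TimeBoundedChain.single le_rfl (hΦT (hxp.trans_le (min_le_left _ _)))).trans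
      ((hτ₁ p (hFS hpF)).flow_start hΦ hT.le)).mono_time (by linarith)
  have hzy : TimeBoundedChain Φ ε T (τ₂ q) z y := by
    rw [← add_halves ε]
    exact (hτ₂ q (hFS hqF)).move_end
      (by rw [dist_comm]; exact hyq.trans_le (min_le_right _ _))
  exact (hxz.trans hzy).mono_time
    (add_le_add (hM₁ (Set.mem_image_of_mem τ₁ hpF)) (hM₂ (Set.mem_image_of_mem τ₂ hqF)))

end TimeBoundedChain

theorem stmt13 {X : Type*} [MetricSpace X] [CompactSpace X]
    (Φ : ℝ → X → X) (hΦ : IsFlow Φ) (S : Set X)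
    (hS : ChainTransOn Φ Set.univ S) :
    ∀ ε T : ℝ, 0 < ε → 0 < T → ∃ Tbar : ℝ, 0 < Tbar ∧
      ∀ x ∈ S, ∀ y ∈ S,
        ∃ (n : ℕ) (u : ℕ → X) (t : ℕ → ℝ), 1 ≤ n ∧ u 0 = x ∧ u n = y ∧
          (∀ i < n, T ≤ t i) ∧
          (∀ i < n, dist (Φ (t i) (u i)) (u (i + 1)) < ε) ∧
          ∑ i ∈ Finset.range n, t i ≤ Tbar := by
  intro ε T hε hT
  obtain ⟨τ, hτ⟩ := hS.exists_timeBoundedChain hΦ hε hT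
  exact ⟨max τ 1, by positivity, fun x hx y hy => (hτ x hx y hy).mono_time (le_max_left _ _)⟩
end
end

section
/- For the matrix A = [[0,1],[0,0]] acting on ℝ², the induced flow SΦ(t,v) = e^{tA}v/‖e^{tA}v‖ on the unit circle S¹ is chain recurrent, i.e., S¹ is a single chain transitive set for SΦ. -/
/-!
Since `A² = 0`, `e^{tA} v = v + t v₂ e₀` with `e₀ = (1, 0)`, so the projected flow fixes `±e₀`
and every other unit vector `v` tends to `sign(v₂) e₀` forward and to `-sign(v₂) e₀` backward
in time. A chain may sit at a fixed point and then jump onto a nearby orbit, which gives the cycle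
`e₀ → (0, -1) → -e₀ → (0, 1) → e₀`; every point is then chain-linked to and from `e₀`.
-/

open Metric Finset

noncomputable section

open Filter Topology NormedSpace

theorem exp_eq_one_add_of_mul_self_eq_zero {𝔸 : Type*} [Ring 𝔸] [Algebra ℚ 𝔸]
    [TopologicalSpace 𝔸] [IsTopologicalRing 𝔸] {a : 𝔸} (ha : a * a = 0) :
    exp a = 1 + a := by
  have hpow : ∀ n, 2 ≤ n → a ^ n = 0 := fun n hn => by
    obtain ⟨k, rfl⟩ := Nat.exists_eq_add_of_le hn
    rw [pow_add, sq, ha, zero_mul]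
  rw [congrFun exp_eq_tsum_rat a, tsum_eq_sum (s := Finset.range 2) fun n hn => by
    rw [hpow n (not_lt.mp (Finset.mem_range.not.mp hn)), smul_zero]]
  simp [sum_range_succ]

theorem matFlow_eq_toLpLin (d : ℕ) (A : Matrix (Fin d) (Fin d) ℝ) (t : ℝ) :
    matFlow d A t = Matrix.toLpLin 2 2 (exp (t • A)) := rfl

theorem matFlow_zero (d : ℕ) (A : Matrix (Fin d) (Fin d) ℝ) (x : Vec d) :
    matFlow d A 0 x = x := by
  simp [matFlow_eq_toLpLin]

theorem matFlow_add (d : ℕ) (A : Matrix (Fin d) (Fin d) ℝ) (s t : ℝ) (x : Vec d) :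
    matFlow d A (s + t) x = matFlow d A s (matFlow d A t x) := by
  have hcomm : Commute (s • A) (t • A) := ((Commute.refl A).smul_left s).smul_right t
  simp [matFlow_eq_toLpLin, add_smul, Matrix.exp_add_of_commute _ _ hcomm]

theorem matFlow_eq_add_smul {d : ℕ} {A : Matrix (Fin d) (Fin d) ℝ} (hA : A * A = 0)
    (t : ℝ) (x : Vec d) : matFlow d A t x = x + t • Matrix.toLpLin 2 2 A x := by
  have h : (t • A) * (t • A) = 0 := by rw [smul_mul_smul, hA, smul_zero]
  simp [matFlow_eq_toLpLin, exp_eq_one_add_of_mul_self_eq_zero h]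

theorem matFlow_ne_zero {d : ℕ} (A : Matrix (Fin d) (Fin d) ℝ) (t : ℝ) {x : Vec d}
    (hx : x ≠ 0) : matFlow d A t x ≠ 0 := by
  intro h
  apply hx
  rw [← matFlow_zero d A x, ← neg_add_cancel t, matFlow_add, h, matFlow_eq_toLpLin, map_zero]

theorem sphFlow_matFlow_add {d : ℕ} (A : Matrix (Fin d) (Fin d) ℝ) (s t : ℝ) {x : Vec d}
    (hx : x ≠ 0) :
    sphFlow (matFlow d A) (s + t) x = sphFlow (matFlow d A) s (sphFlow (matFlow d A) t x) := by
  have hpos : 0 < ‖matFlow d A t x‖⁻¹ := by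
    simpa using matFlow_ne_zero A t hx
  change NormedSpace.normalize _ = NormedSpace.normalize (matFlow d A s (‖matFlow d A t x‖⁻¹ • _))
  rw [matFlow_eq_toLpLin d A s, map_smul, ← matFlow_eq_toLpLin, ← matFlow_add,
    normalize_smul_of_pos hpos]

theorem tendsto_normalize_add_smul {E : Type*} [NormedAddCommGroup E] [NormedSpace ℝ E]
    (x : E) {v : E} (hv : v ≠ 0) :
    Tendsto (fun t : ℝ => NormedSpace.normalize (x + t • v)) atTop
      (𝓝 (NormedSpace.normalize v)) := by
  have hcont : ContinuousAt (NormedSpace.normalize : E → E) v :=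
    have hinv : ContinuousAt (fun w : E => ‖w‖⁻¹) v :=
      continuous_norm.continuousAt.inv₀ (norm_ne_zero_iff.mpr hv)
    hinv.smul continuousAt_id
  have hlim : Tendsto (fun t : ℝ => t⁻¹ • x + v) atTop (𝓝 v) := by
    simpa using ((tendsto_inv_atTop_zero (𝕜 := ℝ)).smul_const x).add_const v
  refine (hcont.tendsto.comp hlim).congr' ?_
  filter_upwards [eventually_gt_atTop 0] with t ht
  rw [Function.comp_apply, ← normalize_smul_of_pos ht, smul_add, smul_smul,
    mul_inv_cancel₀ ht.ne', one_smul]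

theorem normalize_smul_eq_or_eq_neg {E : Type*} [NormedAddCommGroup E] [NormedSpace ℝ E]
    {u : E} (hu : ‖u‖ = 1) {c : ℝ} (hc : c ≠ 0) :
    NormedSpace.normalize (c • u) = u ∨ NormedSpace.normalize (c • u) = -u := by
  rcases hc.lt_or_gt with hc | hc
  · exact .inr <| by rw [normalize_smul_of_neg hc, normalize_eq_self_of_norm_eq_one hu]
  · exact .inl <| by rw [normalize_smul_of_pos hc, normalize_eq_self_of_norm_eq_one hu]

section Chains

variable {X : Type*} [MetricSpace X] {Φ : ℝ → X → X} {S : Set X} {ε T : ℝ}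

theorem ChainIn.trans {x y z : X} (hxy : ChainIn Φ S ε T x y) (hyz : ChainIn Φ S ε T y z) :
    ChainIn Φ S ε T x z := by
  obtain ⟨n, u, t, hn, hu0, hun, huS, htT, hu⟩ := hxy
  obtain ⟨m, v, s, hm, hv0, hvm, hvS, hsT, hv⟩ := hyz
  refine ⟨n + m, fun i => if i < n then u i else v (i - n),
    fun i => if i < n then t i else s (i - n), by omega, ?_, ?_, ?_, ?_, ?_⟩
  · simp [show 0 < n by omega, hu0]
  · simp [hvm]
  · intro i hi
    dsimp only
    split_ifs with h
    · exact huS i h.le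
    · exact hvS (i - n) (by omega)
  · intro i hi
    dsimp only
    split_ifs with h
    · exact htT i h
    · exact hsT (i - n) (by omega)
  · intro i hi
    by_cases h : i < n
    · have hnext : (if i + 1 < n then u (i + 1) else v (i + 1 - n)) = u (i + 1) := by
        split_ifs with h'
        · rfl
        · rw [show i + 1 - n = 0 by omega, hv0, ← hun, show n = i + 1 by omega]
      simpa only [if_pos h, hnext] using hu i h
    · simpa only [if_neg h, if_neg (show ¬ i + 1 < n by omega),
        show i + 1 - n = i - n + 1 by omega] using hv (i - n) (by omega)

theorem chainIn_of_dist_lt {x y : X} (hx : x ∈ S) (hy : y ∈ S) {t : ℝ} (ht : T ≤ t)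
    (h : dist (Φ t x) y < ε) : ChainIn Φ S ε T x y := by
  refine ⟨1, fun i => if i = 0 then x else y, fun _ => t, le_rfl, rfl, rfl, ?_,
    fun _ _ => ht, ?_⟩
  · intro i _
    dsimp only
    split_ifs
    exacts [hx, hy]
  · intro i hi
    obtain rfl : i = 0 := by omega
    simpa using h

theorem chainIn_of_tendsto {x p : X} (hx : x ∈ S) (hp : p ∈ S) (hε : 0 < ε)
    (h : Tendsto (fun t => Φ t x) atTop (𝓝 p)) : ChainIn Φ S ε T x p := by
  obtain ⟨t, hdist, ht⟩ :=
    ((Metric.tendsto_nhds.mp h ε hε).and (eventually_ge_atTop T)).exists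
  exact chainIn_of_dist_lt hx hp ht hdist

theorem chainIn_of_isFixedPt_of_tendsto {q y : X} {z : ℝ → X} (hq : q ∈ S) (hy : y ∈ S)
    (hz : ∀ t, z t ∈ S) (hfix : ∀ t, Φ t q = q) (hzy : ∀ t, Φ t (z t) = y) (hε : 0 < ε)
    (h : Tendsto z atTop (𝓝 q)) : ChainIn Φ S ε T q y := by
  obtain ⟨t, hdist, ht⟩ :=
    ((Metric.tendsto_nhds.mp h ε hε).and (eventually_ge_atTop T)).exists
  refine (chainIn_of_dist_lt hq (hz t) le_rfl ?_).trans
    (chainIn_of_dist_lt (hz t) hy ht ?_)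
  · rwa [hfix, dist_comm]
  · rwa [hzy, dist_self]

end Chains

section Nilpotent

local notation "Ψ" => sphFlow (matFlow 2 !![0, 1; 0, 0])
local notation "e₀" => EuclideanSpace.single (0 : Fin 2) (1 : ℝ)
local notation "e₁" => EuclideanSpace.single (1 : Fin 2) (1 : ℝ)

theorem sphFlow_nilpotent_eq (t : ℝ) (x : Vec 2) :
    Ψ t x = NormedSpace.normalize (x + t • (x 1 • e₀)) := by
  have hA : !![(0 : ℝ), 1; 0, 0] * !![0, 1; 0, 0] = 0 := by
    ext i j; fin_cases i <;> fin_cases j <;> simp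
  have hAx : Matrix.toLpLin 2 2 !![(0 : ℝ), 1; 0, 0] x = x 1 • e₀ := by
    ext i; fin_cases i <;> simp [Matrix.toLpLin_apply, dotProduct]
  change NormedSpace.normalize _ = _
  rw [matFlow_eq_add_smul hA, hAx]

theorem sphFlow_nilpotent_mem_sphere1 {x : Vec 2} (hx : x ≠ 0) (t : ℝ) : Ψ t x ∈ sphere1 2 :=
  norm_normalize (matFlow_ne_zero _ t hx)

theorem sphFlow_nilpotent_of_apply_one_eq_zero {x : Vec 2} (hx : x ∈ sphere1 2) (h : x 1 = 0)
    (t : ℝ) : Ψ t x = x := by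
  rw [sphFlow_nilpotent_eq, h, zero_smul, smul_zero, add_zero,
    normalize_eq_self_of_norm_eq_one hx]

theorem eq_or_eq_neg_of_apply_one_eq_zero {x : Vec 2} (hx : x ∈ sphere1 2) (h : x 1 = 0) :
    x = e₀ ∨ x = -e₀ := by
  have hx0 : x 0 • e₀ = x := by
    ext i; fin_cases i <;> simp [h]
  have hne : x 0 ≠ 0 := by
    rintro h0
    rw [h0, zero_smul] at hx0
    simp [sphere1, ← hx0] at hx
  have := normalize_smul_eq_or_eq_neg (u := e₀) (by simp) hne
  rwa [hx0, normalize_eq_self_of_norm_eq_one hx] at this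

theorem tendsto_sphFlow_nilpotent {x : Vec 2} (h : x 1 ≠ 0) :
    Tendsto (fun t => Ψ t x) atTop (𝓝 (NormedSpace.normalize (x 1 • e₀))) := by
  simp_rw [sphFlow_nilpotent_eq]
  exact tendsto_normalize_add_smul x (smul_ne_zero h (by simp))

theorem tendsto_sphFlow_nilpotent_neg {y : Vec 2} (h : y 1 ≠ 0) :
    Tendsto (fun t => Ψ (-t) y) atTop (𝓝 (-NormedSpace.normalize (y 1 • e₀))) := by
  have hflow : (fun t => Ψ (-t) y) = fun t => NormedSpace.normalize (y + t • -(y 1 • e₀)) := by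
    funext t
    rw [sphFlow_nilpotent_eq, neg_smul, smul_neg]
  rw [hflow, ← normalize_neg]
  exact tendsto_normalize_add_smul y (neg_ne_zero.mpr (smul_ne_zero h (by simp)))

variable {ε T : ℝ}

theorem chainIn_nilpotent_of_apply_one_ne_zero (hε : 0 < ε) {y : Vec 2} (hy : y ∈ sphere1 2)
    (h : y 1 ≠ 0) :
    ChainIn Ψ (sphere1 2) ε T (-NormedSpace.normalize (y 1 • e₀)) y ∧
      ChainIn Ψ (sphere1 2) ε T y (NormedSpace.normalize (y 1 • e₀)) := by
  have hy0 : y ≠ 0 := by rintro rfl; simp at h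
  set p := NormedSpace.normalize (y 1 • e₀) with hp_def
  have hp : p ∈ sphere1 2 := norm_normalize (smul_ne_zero h (by simp))
  have hnp : -p ∈ sphere1 2 := (norm_neg p).trans hp
  have hnp1 : (-p) 1 = 0 := by simp [hp_def, NormedSpace.normalize]
  refine ⟨chainIn_of_isFixedPt_of_tendsto hnp hy
    (fun t => sphFlow_nilpotent_mem_sphere1 hy0 (-t))
    (sphFlow_nilpotent_of_apply_one_eq_zero hnp hnp1) (fun t => ?_) hε
    (tendsto_sphFlow_nilpotent_neg h), chainIn_of_tendsto hy hp hε (tendsto_sphFlow_nilpotent h)⟩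
  rw [← sphFlow_matFlow_add _ _ _ hy0, add_neg_cancel, sphFlow_nilpotent_eq, zero_smul, add_zero,
    normalize_eq_self_of_norm_eq_one hy]

theorem chainIn_nilpotent_single_zero_of_eq_or_eq_neg (hε : 0 < ε) {p : Vec 2}
    (hp : p = e₀ ∨ p = -e₀) :
    ChainIn Ψ (sphere1 2) ε T p e₀ ∧ ChainIn Ψ (sphere1 2) ε T e₀ p := by
  have he : e₀ ∈ sphere1 2 := by simp [sphere1]
  rcases hp with rfl | rfl
  · have hself : ChainIn Ψ (sphere1 2) ε T e₀ e₀ := chainIn_of_dist_lt he he le_rfl <| by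
      rwa [sphFlow_nilpotent_of_apply_one_eq_zero he (by simp), dist_self]
    exact ⟨hself, hself⟩
  · have hup : ChainIn Ψ (sphere1 2) ε T (-e₀) e₁ ∧ ChainIn Ψ (sphere1 2) ε T e₁ e₀ := by
      simpa [normalize_eq_self_of_norm_eq_one] using
        chainIn_nilpotent_of_apply_one_ne_zero (T := T) hε (y := e₁) (by simp [sphere1]) (by simp)
    have hdown : ChainIn Ψ (sphere1 2) ε T e₀ (-e₁) ∧ ChainIn Ψ (sphere1 2) ε T (-e₁) (-e₀) := by
      simpa [normalize_eq_self_of_norm_eq_one] using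
        chainIn_nilpotent_of_apply_one_ne_zero (T := T) hε (y := -e₁) (by simp [sphere1]) (by simp)
    exact ⟨hup.1.trans hup.2, hdown.1.trans hdown.2⟩

theorem chainIn_nilpotent_single_zero_of_mem_sphere1 (hε : 0 < ε) {x : Vec 2}
    (hx : x ∈ sphere1 2) : ChainIn Ψ (sphere1 2) ε T x e₀ ∧ ChainIn Ψ (sphere1 2) ε T e₀ x := by
  by_cases h : x 1 = 0
  · exact chainIn_nilpotent_single_zero_of_eq_or_eq_neg hε (eq_or_eq_neg_of_apply_one_eq_zero hx h)
  obtain ⟨hfrom, hto⟩ := chainIn_nilpotent_of_apply_one_ne_zero (T := T) hε hx h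
  set p := NormedSpace.normalize (x 1 • e₀)
  have hp : p = e₀ ∨ p = -e₀ := normalize_smul_eq_or_eq_neg (by simp) h
  have hnp : -p = e₀ ∨ -p = -e₀ := by rcases hp with hp | hp <;> simp [hp]
  exact ⟨hto.trans (chainIn_nilpotent_single_zero_of_eq_or_eq_neg hε hp).1,
    (chainIn_nilpotent_single_zero_of_eq_or_eq_neg hε hnp).2.trans hfrom⟩

end Nilpotent

theorem stmt18 :
    ChainTransOn (sphFlow (matFlow 2 !![0, 1; 0, 0])) (sphere1 2) (sphere1 2) := by
  intro x hx y hy ε T hε _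
  exact (chainIn_nilpotent_single_zero_of_mem_sphere1 hε hx).1.trans
    (chainIn_nilpotent_single_zero_of_mem_sphere1 hε hy).2
end
end
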